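/- arXiv:2105.14866 — 3 statements merged into one kernel-verified Lean document; each statement's English description precedes it below -/
import Mathlib

section
/- Let γ denote the standard Gaussian probability measure on ℝ (mean 0, variance 1), and let k be a natural number. If f : ℝ → ℝ is k-times continuously differentiable and f together with each of its derivatives f⁽¹⁾, …, f⁽ᵏ⁾ is square-integrable with respect to γ, then ∫ f(x) · H_k(x) dγ(x) = ∫ f⁽ᵏ⁾(x) dγ(x). -/
open MeasureTheory ProbabilityTheory
open scoped NNReal ENNReal

/-!
For the Gaussian density `φ` one has `φ' = -x φ`, hence `(H_k φ)' = (H_k' - x H_k) φ = -H_{k+1} φ`.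
Integrating by parts against `f` over `ℝ` thus gives `∫ f H_{k+1} dγ = ∫ f' H_k dγ`, and the
theorem follows by induction on `k`. The boundary terms vanish because all the products involved
are integrable: Hermite polynomials have Gaussian moments of every order, and the remaining factor
is in `L²(γ)`, so Cauchy–Schwarz applies.
-/

noncomputable def hermiteH : ℕ → ℝ → ℝ
  | 0 => fun _ => 1
  | 1 => fun x => x
  | (k + 2) => fun x => x * hermiteH (k + 1) x - (k + 1) * hermiteH k x

lemma hermiteH_succ (k : ℕ) (x : ℝ) :
    hermiteH (k + 1) x = x * hermiteH k x - k * hermiteH (k - 1) x := by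
  cases k <;> simp [hermiteH]

lemma hasDerivAt_hermiteH (k : ℕ) (x : ℝ) :
    HasDerivAt (hermiteH k) (k * hermiteH (k - 1) x) x := by
  induction k using Nat.twoStepInduction generalizing x with
  | zero => simpa [hermiteH] using hasDerivAt_const x (1 : ℝ)
  | one => simpa [hermiteH] using hasDerivAt_id' x
  | more n ih₀ ih₁ =>
    have h := ((hasDerivAt_id' x).mul (ih₁ x)).sub ((ih₀ x).const_mul ((n : ℝ) + 1))
    refine h.congr_deriv ?_
    simp only [show n + 2 - 1 = n + 1 from rfl, Nat.add_sub_cancel, hermiteH_succ n x]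
    push_cast
    ring

lemma ENNReal.holderTriple_two_mul (p : ℝ≥0∞) : ENNReal.HolderTriple (2 * p) (2 * p) p where
  inv_add_inv_eq_inv := by
    rw [ENNReal.mul_inv (by simp) (by simp), ← two_mul, ← mul_assoc,
      ENNReal.mul_inv_cancel two_ne_zero ENNReal.ofNat_ne_top, one_mul]

lemma memLp_hermiteH {μ : Measure ℝ} [IsFiniteMeasure μ] (hμ : ∀ p : ℝ≥0, MemLp id p μ)
    (k : ℕ) (p : ℝ≥0) : MemLp (hermiteH k) p μ := by
  induction k using Nat.twoStepInduction generalizing p with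
  | zero => exact memLp_const 1
  | one => exact hμ p
  | more n ih₀ ih₁ =>
    have : ENNReal.HolderTriple ((2 * p : ℝ≥0) : ℝ≥0∞) (2 * p : ℝ≥0) p := by
      push_cast; exact ENNReal.holderTriple_two_mul p
    exact ((ih₁ (2 * p)).mul' (hμ (2 * p))).sub ((ih₀ p).const_mul _)

lemma hasDerivAt_gaussianPDFReal (μ : ℝ) (v : ℝ≥0) (x : ℝ) :
    HasDerivAt (gaussianPDFReal μ v) (-((x - μ) / v) * gaussianPDFReal μ v x) x := by
  have h := ((((hasDerivAt_id' x).sub_const μ).fun_pow 2).neg.div_const (2 * (v : ℝ))).exp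
    |>.const_mul (√(2 * Real.pi * v))⁻¹
  refine h.congr_deriv ?_
  simp only [gaussianPDFReal, Pi.neg_apply]
  ring

lemma integrable_gaussianReal_iff {μ : ℝ} {v : ℝ≥0} (hv : v ≠ 0) {g : ℝ → ℝ} :
    Integrable g (gaussianReal μ v) ↔ Integrable (fun x => gaussianPDFReal μ v x * g x) := by
  rw [gaussianReal_of_var_ne_zero μ hv, gaussianPDF_def,
    integrable_withDensity_iff_integrable_smul' (by fun_prop) (by simp)]
  simp [ENNReal.toReal_ofReal (gaussianPDFReal_nonneg μ v _)]

lemma integral_deriv_mul_gaussianReal {μ : ℝ} {v : ℝ≥0} (hv : v ≠ 0) {u u' w w' : ℝ → ℝ}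
    (hu : ∀ x, HasDerivAt u (u' x) x) (hw : ∀ x, HasDerivAt w (w' x) x)
    (hu'w : Integrable (fun x => u' x * w x) (gaussianReal μ v))
    (huw : Integrable (fun x => u x * w x) (gaussianReal μ v))
    (huw' : Integrable (fun x => u x * ((x - μ) / v * w x - w' x)) (gaussianReal μ v)) :
    ∫ x, u' x * w x ∂gaussianReal μ v
      = ∫ x, u x * ((x - μ) / v * w x - w' x) ∂gaussianReal μ v := by
  rw [integrable_gaussianReal_iff hv] at hu'w huw huw'
  simp only [integral_gaussianReal_eq_integral_smul hv, smul_eq_mul]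
  set φ := gaussianPDFReal μ v
  have hW : ∀ x, HasDerivAt (fun y => w y * φ y) (-(((x - μ) / v * w x - w' x) * φ x)) x := by
    intro x
    refine ((hw x).mul (hasDerivAt_gaussianPDFReal μ v x)).congr_deriv ?_
    ring
  have ibp := integral_mul_deriv_eq_deriv_mul_of_integrable (fun x _ => hu x) (fun x _ => hW x)
    (huw'.neg.congr (.of_forall fun x => by simp only [Pi.mul_apply, Pi.neg_apply]; ring))
    (hu'w.congr (.of_forall fun x => by simp only [Pi.mul_apply]; ring))
    (huw.congr (.of_forall fun x => by simp only [Pi.mul_apply]; ring))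
  simp only [mul_neg, integral_neg, neg_inj] at ibp
  calc ∫ x, φ x * (u' x * w x) = ∫ x, u' x * (w x * φ x) := by congr 1; ext x; ring
    _ = ∫ x, u x * (((x - μ) / v * w x - w' x) * φ x) := ibp.symm
    _ = ∫ x, φ x * (u x * ((x - μ) / v * w x - w' x)) := by congr 1; ext x; ring

lemma integral_deriv_mul_hermiteH {f : ℝ → ℝ} (hf : Differentiable ℝ f)
    (hf₀ : MemLp f 2 (gaussianReal 0 1)) (hf₁ : MemLp (deriv f) 2 (gaussianReal 0 1)) (k : ℕ) :
    ∫ x, deriv f x * hermiteH k x ∂gaussianReal 0 1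
      = ∫ x, f x * hermiteH (k + 1) x ∂gaussianReal 0 1 := by
  have hH (j : ℕ) : MemLp (hermiteH j) 2 (gaussianReal 0 1) := by
    exact_mod_cast memLp_hermiteH (fun p => memLp_id_gaussianReal p) j 2
  have hrec (x : ℝ) : (x - 0) / (1 : ℝ≥0) * hermiteH k x - k * hermiteH (k - 1) x
      = hermiteH (k + 1) x := by
    rw [hermiteH_succ, sub_zero, NNReal.coe_one, div_one]
  have := integral_deriv_mul_gaussianReal one_ne_zero (fun x => (hf x).hasDerivAt)
    (hasDerivAt_hermiteH k) (hf₁.integrable_mul (hH k)) (hf₀.integrable_mul (hH k))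
    (by simp only [hrec]; exact hf₀.integrable_mul (hH (k + 1)))
  simpa only [hrec] using this

/-- For the standard Gaussian measure γ and a `k`-times continuously differentiable `f`
with `f, f⁽¹⁾, …, f⁽ᵏ⁾` square-integrable w.r.t. γ, one has
`∫ f(x) H_k(x) dγ(x) = ∫ f⁽ᵏ⁾(x) dγ(x)`. -/
theorem hermite_coeff_eq_integral_iteratedDeriv (k : ℕ) (f : ℝ → ℝ)
    (hf : ContDiff ℝ k f)
    (hint : ∀ j ≤ k, MemLp (iteratedDeriv j f) 2 (gaussianReal 0 1)) :
    ∫ x, f x * hermiteH k x ∂(gaussianReal 0 1)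
      = ∫ x, iteratedDeriv k f x ∂(gaussianReal 0 1) := by
  induction k generalizing f with
  | zero => simp [hermiteH]
  | succ k ih =>
    have hf' : ContDiff ℝ k (deriv f) := (contDiff_succ_iff_deriv.1 hf).2.2
    rw [← integral_deriv_mul_hermiteH (hf.differentiable (by simp))
      (by simpa using hint 0 (by omega)) (by simpa using hint 1 (by omega)), iteratedDeriv_succ']
    exact ih (deriv f) hf' fun j hj => by simpa [iteratedDeriv_succ'] using hint (j + 1) (by omega)
end

section
/- Let μ ∈ ℝ and σ > 0, and let γ_{μ,σ} denote the Gaussian probability measure on ℝ with mean μ and variance σ². Let k be a natural number and let f : ℝ → ℝ be infinitely differentiable with f and each derivative f⁽ʲ⁾ for j ≤ k square-integrable with respect to γ_{μ,σ}. Then the k-th Hermite coefficient of f satisfies f̂(k) := ∫ f(x) · H_k((x−μ)/σ) dγ_{μ,σ}(x) = σᵏ · ∫ f⁽ᵏ⁾(x) dγ_{μ,σ}(x). -/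
open MeasureTheory ProbabilityTheory

lemma hermiteH_rec (k : ℕ) (t : ℝ) :
    hermiteH (k + 1) t = t * hermiteH k t - k * hermiteH (k - 1) t := by
  cases k with
  | zero => simp [hermiteH]
  | succ k => simp [hermiteH]

lemma hermiteH_hasDerivAt_aux (k : ℕ) :
    (∀ x, HasDerivAt (hermiteH k) ((k : ℝ) * hermiteH (k - 1) x) x) ∧
    (∀ x, HasDerivAt (hermiteH (k + 1)) (((k : ℝ) + 1) * hermiteH k x) x) := by
  induction k with
  | zero =>
    constructor
    · intro x
      have h := hasDerivAt_const x (1 : ℝ)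
      simp only [Nat.cast_zero, zero_mul]
      exact h
    · intro x
      have := hasDerivAt_id x
      simp [hermiteH]
      exact this
  | succ k ih =>
    refine ⟨fun x => by simpa using ih.2 x, fun x => ?_⟩
    have hfun : hermiteH (k + 2) =
        fun y => y * hermiteH (k + 1) y - ((k : ℝ) + 1) * hermiteH k y := by
      funext y
      simp only [hermiteH]
      try push_cast
      try ring
    rw [hfun]
    have h1 := (hasDerivAt_id x).mul (ih.2 x)
    have h2 := (ih.1 x).const_mul ((k : ℝ) + 1)
    have h3 := h1.sub h2
    refine h3.congr_deriv ?_
    rw [hermiteH_rec k x]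
    simp only [id_eq]
    push_cast
    ring

lemma hermiteH_hasDerivAt (k : ℕ) (x : ℝ) :
    HasDerivAt (hermiteH k) ((k : ℝ) * hermiteH (k - 1) x) x :=
  (hermiteH_hasDerivAt_aux k).1 x

lemma hermiteH_exists_poly (k : ℕ) :
    ∃ P : Polynomial ℝ, ∀ x, hermiteH k x = P.eval x := by
  induction k using Nat.strong_induction_on with
  | _ k ih =>
    match k with
    | 0 => exact ⟨1, by simp [hermiteH]⟩
    | 1 => exact ⟨Polynomial.X, by simp [hermiteH]⟩
    | (k + 2) =>
      obtain ⟨P, hP⟩ := ih (k + 1) (by omega)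
      obtain ⟨Q, hQ⟩ := ih k (by omega)
      refine ⟨Polynomial.X * P - Polynomial.C ((k : ℝ) + 1) * Q, fun x => ?_⟩
      simp only [hermiteH, hP, hQ, Polynomial.eval_sub, Polynomial.eval_mul,
        Polynomial.eval_X, Polynomial.eval_C]
      try push_cast
      try ring

lemma hermiteH_continuous (k : ℕ) : Continuous (hermiteH k) := by
  obtain ⟨P, hP⟩ := hermiteH_exists_poly k
  have : hermiteH k = fun x => P.eval x := funext hP
  rw [this]
  exact P.continuous

section Gaussian

variable {μ σ : ℝ}

lemma v_ne_zero (hσ : 0 < σ) : (⟨σ ^ 2, sq_nonneg σ⟩ : NNReal) ≠ 0 := by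
  intro h
  have : σ ^ 2 = 0 := congrArg NNReal.toReal h
  nlinarith

lemma my_integrable_pow_mul_exp_neg_mul_sq {b : ℝ} (hb : 0 < b) (n : ℕ) :
    Integrable (fun x : ℝ => x ^ n * Real.exp (-b * x ^ 2)) := by
  have h := integrable_rpow_mul_exp_neg_mul_sq hb
    (s := (n : ℝ)) (lt_of_lt_of_le (by norm_num) (Nat.cast_nonneg n))
  simpa [Real.rpow_natCast] using h

lemma integrable_polyeval_mul_exp {b : ℝ} (hb : 0 < b) (P : Polynomial ℝ) :
    Integrable (fun x : ℝ => P.eval x * Real.exp (-b * x ^ 2)) := by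
  have : (fun x : ℝ => P.eval x * Real.exp (-b * x ^ 2)) =
      fun x : ℝ => ∑ i ∈ Finset.range (P.natDegree + 1),
        P.coeff i * (x ^ i * Real.exp (-b * x ^ 2)) := by
    funext x
    rw [Polynomial.eval_eq_sum_range, Finset.sum_mul]
    simp [mul_assoc]
  rw [this]
  exact integrable_finset_sum _ fun i _ =>
    (my_integrable_pow_mul_exp_neg_mul_sq hb i).const_mul _

lemma pdf_eq (x : ℝ) :
    gaussianPDFReal μ (⟨σ ^ 2, sq_nonneg σ⟩ : NNReal) x
      = (Real.sqrt (2 * Real.pi * σ ^ 2))⁻¹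
          * Real.exp (-(2 * σ ^ 2)⁻¹ * (x - μ) ^ 2) := by
  have harg : -(x - μ) ^ 2 / (2 * (σ ^ 2)) = -(2 * σ ^ 2)⁻¹ * (x - μ) ^ 2 := by ring
  simp only [gaussianPDFReal]
  change (Real.sqrt (2 * Real.pi * σ ^ 2))⁻¹ * Real.exp (-(x - μ) ^ 2 / (2 * σ ^ 2)) = _
  rw [harg]

lemma integrable_poly_mul_gaussian (hσ : 0 < σ) (P : Polynomial ℝ) :
    Integrable (fun x => P.eval x * gaussianPDFReal μ (⟨σ ^ 2, sq_nonneg σ⟩ : NNReal) x) := by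
  have hb : (0 : ℝ) < (2 * σ ^ 2)⁻¹ := by positivity
  have key : Integrable (fun x : ℝ =>
      P.eval x * Real.exp (-(2 * σ ^ 2)⁻¹ * (x - μ) ^ 2)) := by
    set Q : Polynomial ℝ := P.comp (Polynomial.X + Polynomial.C μ) with hQdef
    have hQ : ∀ y : ℝ, Q.eval y = P.eval (y + μ) := by
      intro y; simp [hQdef]
    have h1 : Integrable (fun y : ℝ => Q.eval y * Real.exp (-(2 * σ ^ 2)⁻¹ * y ^ 2)) :=
      integrable_polyeval_mul_exp hb Q
    have h2 := h1.comp_sub_right μ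
    refine h2.congr ?_
    filter_upwards with x
    simp [hQ]
  have : (fun x => P.eval x * gaussianPDFReal μ (⟨σ ^ 2, sq_nonneg σ⟩ : NNReal) x) =
      fun x => (Real.sqrt (2 * Real.pi * σ ^ 2))⁻¹
        * (P.eval x * Real.exp (-(2 * σ ^ 2)⁻¹ * (x - μ) ^ 2)) := by
    funext x
    rw [pdf_eq]
    ring
  rw [this]
  exact key.const_mul _

lemma integral_gaussian_eq (g : ℝ → ℝ) (hσ : 0 < σ) :
    ∫ x, g x ∂(gaussianReal μ (⟨σ ^ 2, sq_nonneg σ⟩ : NNReal)) = ∫ x, g x * gaussianPDFReal μ (⟨σ ^ 2, sq_nonneg σ⟩ : NNReal) x := by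
  rw [gaussianReal_of_var_ne_zero μ (v_ne_zero hσ)]
  have hd : gaussianPDF μ (⟨σ ^ 2, sq_nonneg σ⟩ : NNReal) = fun x => ((gaussianPDFReal μ (⟨σ ^ 2, sq_nonneg σ⟩ : NNReal) x).toNNReal : ENNReal) := rfl
  rw [hd]
  rw [integral_withDensity_eq_integral_smul ((measurable_gaussianPDFReal μ (⟨σ ^ 2, sq_nonneg σ⟩ : NNReal)).real_toNNReal) g]
  congr 1
  funext x
  simp [NNReal.smul_def, Real.coe_toNNReal _ (gaussianPDFReal_nonneg μ (⟨σ ^ 2, sq_nonneg σ⟩ : NNReal) x), mul_comm]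

lemma integrable_gaussian_iff (g : ℝ → ℝ) (hσ : 0 < σ) :
    Integrable g (gaussianReal μ (⟨σ ^ 2, sq_nonneg σ⟩ : NNReal)) ↔
      Integrable (fun x => g x * gaussianPDFReal μ (⟨σ ^ 2, sq_nonneg σ⟩ : NNReal) x) := by
  rw [gaussianReal_of_var_ne_zero μ (v_ne_zero hσ)]
  rw [integrable_withDensity_iff (measurable_gaussianPDF μ (⟨σ ^ 2, sq_nonneg σ⟩ : NNReal))
    (Filter.Eventually.of_forall fun x => ENNReal.ofReal_lt_top)]
  constructor <;> intro h <;> refine h.congr ?_ <;> filter_upwards with x <;>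
    simp [gaussianPDF, ENNReal.toReal_ofReal (gaussianPDFReal_nonneg μ (⟨σ ^ 2, sq_nonneg σ⟩ : NNReal) x)]

lemma memℒp_polyeval (hσ : 0 < σ) (P : Polynomial ℝ) :
    MemLp (fun x => P.eval x) 2 (gaussianReal μ (⟨σ ^ 2, sq_nonneg σ⟩ : NNReal)) := by
  rw [memLp_two_iff_integrable_sq P.continuous.aestronglyMeasurable]
  have : (fun x : ℝ => P.eval x ^ 2) = fun x => (P ^ 2).eval x := by
    funext x; simp
  rw [this, integrable_gaussian_iff _ hσ]
  exact integrable_poly_mul_gaussian hσ (P ^ 2)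

lemma memℒp_hermite_comp (hσ : 0 < σ) (k : ℕ) :
    MemLp (fun x => hermiteH k ((x - μ) / σ)) 2 (gaussianReal μ (⟨σ ^ 2, sq_nonneg σ⟩ : NNReal)) := by
  obtain ⟨P, hP⟩ := hermiteH_exists_poly k
  have h := memℒp_polyeval (μ := μ) hσ
    (P.comp (Polynomial.C σ⁻¹ * (Polynomial.X - Polynomial.C μ)))
  refine h.congr_norm ?_ ?_
  · exact ((hermiteH_continuous k).comp
      (((continuous_id.sub continuous_const)).div_const σ)).aestronglyMeasurable
  · filter_upwards with x
    congr 1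
    rw [hP]
    simp only [Polynomial.eval_comp, Polynomial.eval_mul, Polynomial.eval_C,
      Polynomial.eval_sub, Polynomial.eval_X]
    rw [div_eq_inv_mul]

lemma memℒp_mul_integrable {m : Measure ℝ} {f g : ℝ → ℝ}
    (hf : MemLp f 2 m) (hg : MemLp g 2 m) :
    Integrable (fun x => f x * g x) m := by
  refine (Integrable.mono' (g := fun x => 2⁻¹ * (f x ^ 2 + g x ^ 2))
    (by simpa using (hf.integrable_sq.add hg.integrable_sq).const_mul (2⁻¹ : ℝ))
    (hf.1.mul hg.1)) ?_
  filter_upwards with x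
  simp only [Pi.mul_apply, Real.norm_eq_abs, abs_mul]
  nlinarith [sq_nonneg (|f x| - |g x|), sq_abs (f x), sq_abs (g x), abs_nonneg (f x),
    abs_nonneg (g x)]

lemma pdf_hasDerivAt (hσ : 0 < σ) (x : ℝ) :
    HasDerivAt (gaussianPDFReal μ (⟨σ ^ 2, sq_nonneg σ⟩ : NNReal))
      (-((x - μ) / σ ^ 2) * gaussianPDFReal μ (⟨σ ^ 2, sq_nonneg σ⟩ : NNReal) x) x := by
  have hfun : gaussianPDFReal μ (⟨σ ^ 2, sq_nonneg σ⟩ : NNReal) =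
      fun x => (Real.sqrt (2 * Real.pi * σ ^ 2))⁻¹
        * Real.exp (-(2 * σ ^ 2)⁻¹ * (x - μ) ^ 2) := funext fun x => pdf_eq x
  rw [hfun]
  have hinner : HasDerivAt (fun x : ℝ => -(2 * σ ^ 2)⁻¹ * (x - μ) ^ 2)
      (-(2 * σ ^ 2)⁻¹ * (2 * (x - μ) ^ 1 * 1)) x :=
    (((hasDerivAt_id x).sub_const μ).pow 2).const_mul _
  have h := (hinner.exp).const_mul (Real.sqrt (2 * Real.pi * σ ^ 2))⁻¹
  refine h.congr_deriv ?_
  have hσ2 : σ ^ 2 ≠ 0 := by positivity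
  field_simp

lemma hermite_comp_hasDerivAt (hσ : 0 < σ) (k : ℕ) (x : ℝ) :
    HasDerivAt (fun x => hermiteH k ((x - μ) / σ))
      ((k : ℝ) * hermiteH (k - 1) ((x - μ) / σ) * (1 / σ)) x := by
  have hinner : HasDerivAt (fun x : ℝ => (x - μ) / σ) (1 / σ) x := by
    simpa using ((hasDerivAt_id x).sub_const μ).div_const σ
  exact (hermiteH_hasDerivAt k ((x - μ) / σ)).comp x hinner

/-- The integration-by-parts step. -/
lemma gaussian_ibp (hσ : 0 < σ) (k : ℕ) (f : ℝ → ℝ) (hf : ContDiff ℝ (⊤ : ℕ∞) f)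
    (h0 : MemLp f 2 (gaussianReal μ (⟨σ ^ 2, sq_nonneg σ⟩ : NNReal))) (h1 : MemLp (deriv f) 2 (gaussianReal μ (⟨σ ^ 2, sq_nonneg σ⟩ : NNReal))) :
    ∫ x, f x * hermiteH (k + 1) ((x - μ) / σ) ∂(gaussianReal μ (⟨σ ^ 2, sq_nonneg σ⟩ : NNReal))
      = σ * ∫ x, deriv f x * hermiteH k ((x - μ) / σ) ∂(gaussianReal μ (⟨σ ^ 2, sq_nonneg σ⟩ : NNReal)) := by
  have hσ0 : σ ≠ 0 := hσ.ne'
  set ρ : ℝ → ℝ := gaussianPDFReal μ (⟨σ ^ 2, sq_nonneg σ⟩ : NNReal) with hρ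
  -- integrability facts
  have hB : Integrable (fun x => f x * hermiteH (k + 1) ((x - μ) / σ) * ρ x) := by
    have := (integrable_gaussian_iff
      (fun x => f x * hermiteH (k + 1) ((x - μ) / σ)) hσ).mp
      (memℒp_mul_integrable h0 (memℒp_hermite_comp hσ (k + 1)))
    exact this
  have hA : Integrable (fun x => deriv f x * hermiteH k ((x - μ) / σ) * ρ x) := by
    have := (integrable_gaussian_iff
      (fun x => deriv f x * hermiteH k ((x - μ) / σ)) hσ).mp
      (memℒp_mul_integrable h1 (memℒp_hermite_comp hσ k))
    exact this
  have hGint : Integrable (fun x => f x * hermiteH k ((x - μ) / σ) * ρ x) := by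
    have := (integrable_gaussian_iff
      (fun x => f x * hermiteH k ((x - μ) / σ)) hσ).mp
      (memℒp_mul_integrable h0 (memℒp_hermite_comp hσ k))
    exact this
  -- the derivative identity
  have hderiv : ∀ x, HasDerivAt (fun x => f x * (hermiteH k ((x - μ) / σ) * ρ x))
      (deriv f x * hermiteH k ((x - μ) / σ) * ρ x
        - σ⁻¹ * (f x * hermiteH (k + 1) ((x - μ) / σ) * ρ x)) x := by
    intro x
    have hGd : HasDerivAt (fun x => hermiteH k ((x - μ) / σ) * ρ x)
        (-(σ⁻¹) * (hermiteH (k + 1) ((x - μ) / σ) * ρ x)) x := by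
      have h := (hermite_comp_hasDerivAt (μ := μ) hσ k x).mul (pdf_hasDerivAt (μ := μ) hσ x)
      refine h.congr_deriv ?_
      set t := (x - μ) / σ with ht
      have hx : x - μ = t * σ := by rw [ht]; field_simp
      rw [hermiteH_rec k t, hx]
      have hσ2 : σ ^ 2 ≠ 0 := by positivity
      field_simp
      ring
    have hfd : HasDerivAt f (deriv f x) x :=
      (hf.differentiable (by simp) x).hasDerivAt
    have h := hfd.mul hGd
    refine h.congr_deriv ?_
    beta_reduce
    ring
  -- integral of derivative is zero
  have hzero : ∫ x, (deriv f x * hermiteH k ((x - μ) / σ) * ρ x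
      - σ⁻¹ * (f x * hermiteH (k + 1) ((x - μ) / σ) * ρ x)) = 0 := by
    refine integral_eq_zero_of_hasDerivAt_of_integrable hderiv ?_ ?_
    · exact hA.sub (hB.const_mul _)
    · refine hGint.congr ?_
      filter_upwards with x
      ring
  rw [integral_sub hA (hB.const_mul _), integral_const_mul, sub_eq_zero] at hzero
  rw [integral_gaussian_eq _ hσ, integral_gaussian_eq _ hσ]
  have hAr : ∫ x, deriv f x * hermiteH k ((x - μ) / σ) * ρ x
      = σ⁻¹ * ∫ x, f x * hermiteH (k + 1) ((x - μ) / σ) * ρ x := hzero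
  rw [hAr]
  field_simp
  rfl

end Gaussian

/-- For the Gaussian measure `γ_{μ,σ}` with mean `μ` and variance `σ²` and an infinitely
differentiable `f` with `f, f⁽¹⁾, …, f⁽ᵏ⁾` square-integrable w.r.t. `γ_{μ,σ}`, the `k`-th
Hermite coefficient of `f` satisfies
`∫ f(x) H_k((x−μ)/σ) dγ_{μ,σ}(x) = σᵏ ∫ f⁽ᵏ⁾(x) dγ_{μ,σ}(x)`. -/
theorem hermite_coeff_general_gaussian (μ σ : ℝ) (hσ : 0 < σ) (k : ℕ) (f : ℝ → ℝ)
    (hf : ContDiff ℝ (⊤ : ℕ∞) f)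
    (hint : ∀ j ≤ k, MemLp (iteratedDeriv j f) 2 (gaussianReal μ ⟨σ ^ 2, sq_nonneg σ⟩)) :
    ∫ x, f x * hermiteH k ((x - μ) / σ) ∂(gaussianReal μ ⟨σ ^ 2, sq_nonneg σ⟩)
      = σ ^ k * ∫ x, iteratedDeriv k f x ∂(gaussianReal μ ⟨σ ^ 2, sq_nonneg σ⟩) := by
  induction k generalizing f with
  | zero =>
    simp [hermiteH, iteratedDeriv_zero]
  | succ k ih =>
    have h0 : MemLp f 2 (gaussianReal μ ⟨σ ^ 2, sq_nonneg σ⟩) := by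
      have := hint 0 (by omega)
      rwa [iteratedDeriv_zero] at this
    have h1 : MemLp (deriv f) 2 (gaussianReal μ ⟨σ ^ 2, sq_nonneg σ⟩) := by
      have := hint 1 (by omega)
      rwa [iteratedDeriv_one] at this
    rw [gaussian_ibp hσ k f hf h0 h1]
    have hfd : ContDiff ℝ (⊤ : ℕ∞) (deriv f) :=
      ((contDiff_succ_iff_deriv (n := ((⊤ : ℕ∞) : WithTop ℕ∞))).mp
        (by rw [← WithTop.coe_one, ← WithTop.coe_add, top_add]; exact hf)).2.2
    have hintd : ∀ j ≤ k, MemLp (iteratedDeriv j (deriv f)) 2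
        (gaussianReal μ ⟨σ ^ 2, sq_nonneg σ⟩) := by
      intro j hj
      rw [← iteratedDeriv_succ']
      exact hint (j + 1) (by omega)
    rw [ih (deriv f) hfd hintd, ← iteratedDeriv_succ']
    ring
end

section
/- Let μ ∈ ℝ and σ > 0, and let γ_{μ,σ} denote the Gaussian probability measure on ℝ with mean μ and variance σ². If f : ℝ → ℝ is Lipschitz continuous with Lipschitz constant L (and hence square-integrable with respect to γ_{μ,σ}), then Var(f) ≤ L² · σ². -/
/-!
Comparing with the constant `f (𝔼 X)` rather than with the mean of `f ∘ X`,
`Var (f ∘ X) ≤ 𝔼 (f X - f (𝔼 X))² ≤ L² 𝔼 (X - 𝔼 X)² = L² Var X`,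
and the Gaussian `γ_{μ,σ}` has variance `σ²`.
-/

open MeasureTheory ProbabilityTheory

namespace ProbabilityTheory

variable {Ω : Type*} {mΩ : MeasurableSpace Ω} {μ : Measure Ω} [IsProbabilityMeasure μ]

lemma variance_le_integral_sub_sq {X : Ω → ℝ} (hX : AEStronglyMeasurable X μ) (c : ℝ) :
    Var[X; μ] ≤ ∫ ω, (X ω - c) ^ 2 ∂μ := by
  rw [← variance_sub_const hX c]
  exact variance_le_expectation_sq (hX.sub aestronglyMeasurable_const)

lemma _root_.LipschitzWith.variance_comp_le {L : NNReal} {f : ℝ → ℝ} (hf : LipschitzWith L f)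
    {X : Ω → ℝ} (hX : MemLp X 2 μ) :
    Var[fun ω ↦ f (X ω); μ] ≤ (L : ℝ) ^ 2 * Var[X; μ] := by
  have hfX : AEStronglyMeasurable (fun ω ↦ f (X ω)) μ :=
    hf.continuous.comp_aestronglyMeasurable hX.aestronglyMeasurable
  have hpointwise : ∀ x y, (f x - f y) ^ 2 ≤ (L : ℝ) ^ 2 * (x - y) ^ 2 := fun x y ↦ by
    rw [← sq_abs (x - y), ← mul_pow, ← sq_abs (f x - f y)]
    exact pow_le_pow_left₀ (abs_nonneg _) (by simpa [Real.dist_eq] using hf.dist_le_mul x y) 2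
  calc Var[fun ω ↦ f (X ω); μ] ≤ ∫ ω, (f (X ω) - f μ[X]) ^ 2 ∂μ :=
        variance_le_integral_sub_sq hfX _
    _ ≤ ∫ ω, (L : ℝ) ^ 2 * (X ω - μ[X]) ^ 2 ∂μ :=
        integral_mono_of_nonneg (.of_forall fun _ ↦ sq_nonneg _)
          (((hX.sub (memLp_const _)).integrable_sq).const_mul _)
          (.of_forall fun _ ↦ hpointwise _ _)
    _ = (L : ℝ) ^ 2 * Var[X; μ] := by
        rw [integral_const_mul, variance_eq_integral hX.aestronglyMeasurable.aemeasurable]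

end ProbabilityTheory

theorem gaussian_variance_le_lipschitz_general (μ σ : ℝ) (L : NNReal) (f : ℝ → ℝ)
    (hf : LipschitzWith L f) :
    ∫ x, (f x - ∫ y, f y ∂(gaussianReal μ ⟨σ ^ 2, sq_nonneg σ⟩)) ^ 2
        ∂(gaussianReal μ ⟨σ ^ 2, sq_nonneg σ⟩)
      ≤ (L : ℝ) ^ 2 * σ ^ 2 := by
  -- instance search does not see through the anonymous constructor `⟨σ ^ 2, _⟩`
  set v : NNReal := ⟨σ ^ 2, sq_nonneg σ⟩
  calc _ = Var[f; gaussianReal μ v] := (variance_eq_integral hf.continuous.aemeasurable).symm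
    _ ≤ (L : ℝ) ^ 2 * Var[id; gaussianReal μ v] := hf.variance_comp_le (memLp_id_gaussianReal 2)
    _ = (L : ℝ) ^ 2 * σ ^ 2 := by rw [variance_id_gaussianReal]; rfl

/-- If `f : ℝ → ℝ` is Lipschitz with constant `L`, then its variance under the Gaussian
measure `γ_{μ,σ}` with mean `μ` and variance `σ²` satisfies `Var(f) ≤ L²·σ²`. -/
theorem gaussian_variance_le_lipschitz (μ σ : ℝ) (hσ : 0 < σ) (L : NNReal) (f : ℝ → ℝ)
    (hf : LipschitzWith L f) :
    ∫ x, (f x - ∫ y, f y ∂(gaussianReal μ ⟨σ ^ 2, sq_nonneg σ⟩)) ^ 2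
        ∂(gaussianReal μ ⟨σ ^ 2, sq_nonneg σ⟩)
      ≤ (L : ℝ) ^ 2 * σ ^ 2 :=
  gaussian_variance_le_lipschitz_general μ σ L f hf
end
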